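/- arXiv:1206.1263 — 3 statements merged into one kernel-verified Lean document; each statement's English description precedes it below -/
import Mathlib

section
/- (Compatibility formulas for the Neumann data in the double resonant case, formula (3.13).) Let φ, ψ be solutions of the resonance problem, set θ₁ = φ₂(1)ψ₃(1) − φ₃(1)ψ₂(1), θ₂ = φ₃(1)ψ₁(1) − φ₁(1)ψ₃(1), θ₃ = φ₁(1)ψ₂(1) − φ₂(1)ψ₁(1), and assume θ₃ ≠ 0. Let gₙ ∈ L²(0,1) and let u = (u₁,u₂,u₃), with each uₙ and uₙ' absolutely continuous on [0,1], satisfy −uₙ'' + αQₙuₙ = gₙ a.e. on (0,1) and the Kirchhoff conditions at the vertex. Then u₁'(1) = (θ₁/θ₃) u₃'(1) + (1/θ₃) ∑_{n=1}^{3} ∫_0^1 (φ₂(1)ψₙ(t) − ψ₂(1)φₙ(t)) gₙ(t) dt and u₂'(1) = (θ₂/θ₃) u₃'(1) + (1/θ₃) ∑_{n=1}^{3} ∫_0^1 (ψ₁(1)φₙ(t) − φ₁(1)ψₙ(t)) gₙ(t) dt. -/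
open MeasureTheory Set

noncomputable section

/-- The `L²(Γ)`-norm of a triple of functions on the half-line `[0,∞)`. -/
def graphNorm (f : Fin 3 → ℝ → ℂ) : ℝ :=
  Real.sqrt (∑ n : Fin 3, ∫ x in Ioi (0:ℝ), ‖f n x‖ ^ 2)

/-- Membership of each component in `L²(0,∞)`. -/
def memL2Gamma (f : Fin 3 → ℝ → ℂ) : Prop :=
  ∀ n, MemLp (f n) 2 (volume.restrict (Ioi (0:ℝ)))

/-- `y ∈ 𝒲²₂(Γ)`, encoded with derivative data `y'`, `y''`:
`y` and `y'` are (locally) absolutely continuous on `[0,∞)` with densities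
`y'` and `y''` respectively, and `y, y', y'' ∈ L²(0,∞)` on each edge. -/
def memW22Gamma (y y' y'' : Fin 3 → ℝ → ℂ) : Prop :=
  (∀ n, ∀ x ∈ Ici (0:ℝ), y n x = y n 0 + ∫ t in (0:ℝ)..x, y' n t) ∧
  (∀ n, ∀ x ∈ Ici (0:ℝ), y' n x = y' n 0 + ∫ t in (0:ℝ)..x, y'' n t) ∧
  memL2Gamma y ∧ memL2Gamma y' ∧ memL2Gamma y''

/-- Kirchhoff interface conditions at the vertex (`x = 0` on each edge). -/
def kirchhoff (u u' : Fin 3 → ℝ → ℂ) : Prop :=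
  u 0 0 = u 1 0 ∧ u 1 0 = u 2 0 ∧ u' 0 0 + u' 1 0 + u' 2 0 = 0

/-- `u`, `u'` absolutely continuous on `[0,1]` with densities `u'`, `u''`. -/
def acOmega (u u' u'' : Fin 3 → ℝ → ℂ) : Prop :=
  ∀ n, IntervalIntegrable (u' n) volume 0 1 ∧ IntervalIntegrable (u'' n) volume 0 1 ∧
    (∀ x ∈ Icc (0:ℝ) 1, u n x = u n 0 + ∫ t in (0:ℝ)..x, u' n t) ∧
    (∀ x ∈ Icc (0:ℝ) 1, u' n x = u' n 0 + ∫ t in (0:ℝ)..x, u'' n t)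

/-- The `𝒲²₂(Ω)`-norm of a triple on the compact star `Ω`. -/
def omegaNorm (u u' u'' : Fin 3 → ℝ → ℂ) : ℝ :=
  Real.sqrt (∑ n : Fin 3, ∫ x in Ioo (0:ℝ) 1,
    (‖u n x‖ ^ 2 + ‖u' n x‖ ^ 2 + ‖u'' n x‖ ^ 2))

/-- Admissible potential triple: smooth, supported in `[0,1]`, total zero mean. -/
def QAdmissible (Q : Fin 3 → ℝ → ℝ) : Prop :=
  (∀ n, ContDiff ℝ (⊤ : ℕ∞) (Q n)) ∧
  (∀ n, ∀ x, x ∉ Icc (0:ℝ) 1 → Q n x = 0) ∧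
  (∑ n : Fin 3, ∫ x in (0:ℝ)..1, Q n x) = 0

/-- A (C², extended to ℝ) solution of the resonance problem
`-h'' + αQh = 0` on `[0,1]`, Kirchhoff at the vertex, `h'(1) = 0`. -/
def ResonanceSol (α : ℝ) (Q : Fin 3 → ℝ → ℝ) (h : Fin 3 → ℝ → ℂ) : Prop :=
  (∀ n, ContDiff ℝ 2 (h n)) ∧
  (∀ n, ∀ x ∈ Icc (0:ℝ) 1,
    - deriv (deriv (h n)) x + (↑(α * Q n x) : ℂ) * h n x = 0) ∧
  h 0 0 = h 1 0 ∧ h 1 0 = h 2 0 ∧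
  deriv (h 0) 0 + deriv (h 1) 0 + deriv (h 2) 0 = 0 ∧
  (∀ n, deriv (h n) 1 = 0)

lemma tri_swap (f w : ℝ → ℂ) (hf : Continuous f) (hw : IntervalIntegrable w volume 0 1) :
    ∫ x in (0:ℝ)..1, f x * (∫ t in (0:ℝ)..x, w t)
      = ∫ t in (0:ℝ)..1, (∫ x in t..1, f x) * w t := by
  have hw' : IntegrableOn w (Ioc (0:ℝ) 1) :=
    (intervalIntegrable_iff_integrableOn_Ioc_of_le zero_le_one).mp hw
  set μ := volume.restrict (Ioc (0:ℝ) 1) with hμ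
  have hS : MeasurableSet {p : ℝ × ℝ | p.2 ≤ p.1} :=
    measurableSet_le measurable_snd measurable_fst
  have hfI : Integrable f μ := hf.integrableOn_Ioc
  have hF : Integrable ({p : ℝ × ℝ | p.2 ≤ p.1}.indicator
      (fun p : ℝ × ℝ => f p.1 * w p.2)) (μ.prod μ) :=
    (hfI.mul_prod hw').indicator hS
  have step1 : ∀ x ∈ Ioc (0:ℝ) 1, f x * (∫ t in (0:ℝ)..x, w t)
      = ∫ t, ({p : ℝ × ℝ | p.2 ≤ p.1}.indicator (fun p : ℝ × ℝ => f p.1 * w p.2)) (x, t) ∂μ := by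
    intro x hx
    have e1 : (fun t => ({p : ℝ × ℝ | p.2 ≤ p.1}.indicator
        (fun p : ℝ × ℝ => f p.1 * w p.2)) (x, t)) = (Iic x).indicator (fun t => f x * w t) := by
      ext t
      by_cases h : t ≤ x <;> simp [Set.indicator_apply, h]
    rw [e1, hμ, MeasureTheory.integral_indicator measurableSet_Iic,
      Measure.restrict_restrict measurableSet_Iic]
    have e2 : Iic x ∩ Ioc (0:ℝ) 1 = Ioc 0 x := by
      ext t
      simp only [mem_inter_iff, mem_Iic, mem_Ioc]
      exact ⟨fun h => ⟨h.2.1, h.1⟩, fun h => ⟨h.2, h.1, h.2.trans hx.2⟩⟩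
    rw [e2, ← intervalIntegral.integral_of_le hx.1.le, ← intervalIntegral.integral_const_mul]
  have step2 : ∀ t ∈ Ioc (0:ℝ) 1, (∫ x in t..1, f x) * w t
      = ∫ x, ({p : ℝ × ℝ | p.2 ≤ p.1}.indicator (fun p : ℝ × ℝ => f p.1 * w p.2)) (x, t) ∂μ := by
    intro t ht
    have e1 : (fun x => ({p : ℝ × ℝ | p.2 ≤ p.1}.indicator
        (fun p : ℝ × ℝ => f p.1 * w p.2)) (x, t)) = (Ici t).indicator (fun x => f x * w t) := by
      ext x
      by_cases h : t ≤ x <;> simp [Set.indicator_apply, h]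
    rw [e1, hμ, MeasureTheory.integral_indicator measurableSet_Ici,
      Measure.restrict_restrict measurableSet_Ici]
    have e2 : Ici t ∩ Ioc (0:ℝ) 1 = Icc t 1 := by
      ext x
      simp only [mem_inter_iff, mem_Ici, mem_Ioc, mem_Icc]
      exact ⟨fun h => ⟨h.1, h.2.2⟩, fun h => ⟨h.1, lt_of_lt_of_le ht.1 h.1, h.2⟩⟩
    rw [e2, integral_Icc_eq_integral_Ioc, ← intervalIntegral.integral_of_le ht.2,
      ← intervalIntegral.integral_mul_const]
  rw [intervalIntegral.integral_of_le zero_le_one, intervalIntegral.integral_of_le zero_le_one]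
  rw [setIntegral_congr_fun measurableSet_Ioc step1, setIntegral_congr_fun measurableSet_Ioc step2]
  exact MeasureTheory.integral_integral_swap hF

lemma parts_prim (f f' w : ℝ → ℂ) (c : ℂ)
    (hd : ∀ x, HasDerivAt f (f' x) x) (hf' : Continuous f')
    (hw : IntervalIntegrable w volume 0 1) :
    ∫ x in (0:ℝ)..1, f x * w x
      = f 1 * (c + ∫ t in (0:ℝ)..1, w t) - f 0 * c
        - ∫ x in (0:ℝ)..1, f' x * (c + ∫ t in (0:ℝ)..x, w t) := by
  have hf : Continuous f := by
    refine continuous_iff_continuousAt.mpr fun x => (hd x).continuousAt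
  have hwIcc : IntegrableOn w (Icc (0:ℝ) 1) :=
    (integrableOn_Icc_iff_integrableOn_Ioc enorm_ne_top).mpr
      ((intervalIntegrable_iff_integrableOn_Ioc_of_le zero_le_one).mp hw)
  have hVcont : ContinuousOn (fun x => ∫ t in (0:ℝ)..x, w t) (Icc (0:ℝ) 1) := by
    have := intervalIntegral.continuousOn_primitive_interval
      (f := w) (a := (0:ℝ)) (b := 1) (μ := volume) (by rwa [uIcc_of_le zero_le_one])
    rwa [uIcc_of_le zero_le_one] at this
  have hftc : ∀ a b : ℝ, (∫ x in a..b, f' x) = f b - f a := fun a b =>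
    intervalIntegral.integral_eq_sub_of_hasDerivAt (fun x _ => hd x)
      (hf'.intervalIntegrable a b)
  have hfw : IntervalIntegrable (fun x => f x * w x) volume 0 1 :=
    hw.continuousOn_mul hf.continuousOn
  have hf'c : IntervalIntegrable (fun x => f' x * c) volume 0 1 :=
    (hf'.mul continuous_const).intervalIntegrable 0 1
  have hf'V : IntervalIntegrable (fun x => f' x * (∫ t in (0:ℝ)..x, w t)) volume 0 1 := by
    apply ContinuousOn.intervalIntegrable
    rw [uIcc_of_le zero_le_one]
    exact hf'.continuousOn.mul hVcont
  have hsplit : ∫ x in (0:ℝ)..1, f' x * (c + ∫ t in (0:ℝ)..x, w t)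
      = (∫ x in (0:ℝ)..1, f' x * c) + ∫ x in (0:ℝ)..1, f' x * (∫ t in (0:ℝ)..x, w t) := by
    rw [← intervalIntegral.integral_add hf'c hf'V]
    congr 1; ext x; ring
  have h1 : (∫ x in (0:ℝ)..1, f' x * c) = (f 1 - f 0) * c := by
    rw [intervalIntegral.integral_mul_const, hftc]
  have h2 : ∫ x in (0:ℝ)..1, f' x * (∫ t in (0:ℝ)..x, w t)
      = f 1 * (∫ t in (0:ℝ)..1, w t) - ∫ x in (0:ℝ)..1, f x * w x := by
    rw [tri_swap f' w hf' hw]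
    have : ∀ t, (∫ x in t..(1:ℝ), f' x) * w t = f 1 * w t - f t * w t := by
      intro t; rw [hftc]; ring
    rw [intervalIntegral.integral_congr (fun t _ => this t),
      intervalIntegral.integral_sub ((hw.const_mul (f 1))) hfw,
      intervalIntegral.integral_const_mul]
  rw [hsplit, h1, h2]; ring

lemma edge_green (q : ℝ → ℝ) (hqc : Continuous q) (h : ℝ → ℂ) (hh : ContDiff ℝ 2 h)
    (hode : ∀ x ∈ Icc (0:ℝ) 1, - deriv (deriv h) x + (q x : ℂ) * h x = 0)
    (u u' u'' gn : ℝ → ℂ)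
    (hI' : IntervalIntegrable u' volume 0 1) (hI'' : IntervalIntegrable u'' volume 0 1)
    (hrep : ∀ x ∈ Icc (0:ℝ) 1, u x = u 0 + ∫ t in (0:ℝ)..x, u' t)
    (hrep' : ∀ x ∈ Icc (0:ℝ) 1, u' x = u' 0 + ∫ t in (0:ℝ)..x, u'' t)
    (hae : ∀ᵐ x ∂(volume.restrict (Ioo (0:ℝ) 1)), - u'' x + (q x : ℂ) * u x = gn x) :
    ∫ t in (0:ℝ)..1, h t * gn t
      = - h 1 * u' 1 + h 0 * u' 0 + deriv h 1 * u 1 - deriv h 0 * u 0 := by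
  -- derivative facts for h
  have hh1 : ContDiff ℝ 1 (deriv h) := by
    exact ((contDiff_succ_iff_deriv (n := 1)).mp hh).2.2
  have hdh : ∀ x, HasDerivAt h (deriv h x) x := fun x =>
    (hh.differentiable (by norm_num) x).hasDerivAt
  have hdhc : Continuous (deriv h) := hh1.continuous
  have hddh : ∀ x, HasDerivAt (deriv h) (deriv (deriv h) x) x := fun x =>
    (hh1.differentiable one_ne_zero x).hasDerivAt
  have hddhc : Continuous (deriv (deriv h)) := by
    exact ((contDiff_succ_iff_deriv (n := 0)).mp hh1).2.2.continuous
  have hhc : Continuous h := hh.continuous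
  -- the continuous representatives
  set U : ℝ → ℂ := fun x => u 0 + ∫ t in (0:ℝ)..x, u' t with hU
  set U' : ℝ → ℂ := fun x => u' 0 + ∫ t in (0:ℝ)..x, u'' t with hU'
  have hUcont : ContinuousOn U (Icc (0:ℝ) 1) := by
    have := intervalIntegral.continuousOn_primitive_interval
      (f := u') (a := (0:ℝ)) (b := 1) (μ := volume)
      (by rw [uIcc_of_le zero_le_one]
          exact (integrableOn_Icc_iff_integrableOn_Ioc enorm_ne_top).mpr
            ((intervalIntegrable_iff_integrableOn_Ioc_of_le zero_le_one).mp hI'))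
    rw [uIcc_of_le zero_le_one] at this
    exact continuousOn_const.add this
  -- Step A : rewrite the integrand a.e.
  have hA : ∫ t in (0:ℝ)..1, h t * gn t
      = ∫ t in (0:ℝ)..1, (- (h t * u'' t) + (q t : ℂ) * h t * U t) := by
    apply intervalIntegral.integral_congr_ae
    have h1 : ∀ᵐ x : ℝ ∂volume, x ∈ Ioo (0:ℝ) 1 → - u'' x + (q x : ℂ) * u x = gn x :=
      (ae_restrict_iff' measurableSet_Ioo).mp hae
    have h2 : ∀ᵐ x : ℝ ∂volume, x ≠ (1:ℝ) := by
      rw [ae_iff]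
      simpa using measure_singleton (1:ℝ)
    filter_upwards [h1, h2] with x hx hx1 hmem
    rw [uIoc_of_le zero_le_one] at hmem
    have hxI : x ∈ Ioo (0:ℝ) 1 := ⟨hmem.1, lt_of_le_of_ne hmem.2 hx1⟩
    have hgx := hx hxI
    have hux : u x = U x := hrep x (Ioo_subset_Icc_self hxI)
    rw [← hgx, hux]; ring
  -- integrability of pieces
  have hhu'' : IntervalIntegrable (fun t => h t * u'' t) volume 0 1 :=
    hI''.continuousOn_mul hhc.continuousOn
  have hqhU : IntervalIntegrable (fun t => (q t : ℂ) * h t * U t) volume 0 1 := by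
    apply ContinuousOn.intervalIntegrable
    rw [uIcc_of_le zero_le_one]
    exact (((Complex.continuous_ofReal.comp hqc).mul hhc).continuousOn).mul hUcont
  have hB : ∫ t in (0:ℝ)..1, (- (h t * u'' t) + (q t : ℂ) * h t * U t)
      = - (∫ t in (0:ℝ)..1, h t * u'' t) + ∫ t in (0:ℝ)..1, (q t : ℂ) * h t * U t := by
    have hneg : IntervalIntegrable (fun t => -(h t * u'' t)) volume 0 1 := hhu''.neg
    rw [intervalIntegral.integral_add hneg hqhU, intervalIntegral.integral_neg]
  -- first parts: ∫ h u''
  have hP1 : ∫ t in (0:ℝ)..1, h t * u'' t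
      = h 1 * u' 1 - h 0 * u' 0 - ∫ x in (0:ℝ)..1, deriv h x * U' x := by
    have := parts_prim h (deriv h) u'' (u' 0) hdh hdhc hI''
    rw [this, ← hrep' 1 (by norm_num)]
  -- second parts: ∫ (deriv h) U' = ∫ (deriv h) u'
  have hP2 : ∫ x in (0:ℝ)..1, deriv h x * U' x = ∫ x in (0:ℝ)..1, deriv h x * u' x := by
    apply intervalIntegral.integral_congr
    intro x hx
    rw [uIcc_of_le zero_le_one] at hx
    show deriv h x * U' x = deriv h x * u' x
    rw [hrep' x hx]
  have hP3 : ∫ x in (0:ℝ)..1, deriv h x * u' x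
      = deriv h 1 * u 1 - deriv h 0 * u 0 - ∫ x in (0:ℝ)..1, deriv (deriv h) x * U x := by
    have := parts_prim (deriv h) (deriv (deriv h)) u' (u 0) hddh hddhc hI'
    rw [this, ← hrep 1 (by norm_num)]
  -- ODE substitution
  have hP4 : ∫ x in (0:ℝ)..1, deriv (deriv h) x * U x
      = ∫ x in (0:ℝ)..1, (q x : ℂ) * h x * U x := by
    apply intervalIntegral.integral_congr
    intro x hx
    rw [uIcc_of_le zero_le_one] at hx
    have := hode x hx
    have h2 : deriv (deriv h) x = (q x : ℂ) * h x := by linear_combination -this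
    show deriv (deriv h) x * U x = (q x : ℂ) * h x * U x
    rw [h2]
  rw [hA, hB, hP1, hP2, hP3, hP4]
  ring


/-- Compatibility formulas (3.13) for the Neumann data in the double resonant case. -/
theorem neumann_compatibility_double
    (α : ℝ) (Q : Fin 3 → ℝ → ℝ) (hQ : QAdmissible Q)
    (φ ψ : Fin 3 → ℝ → ℂ) (hφ : ResonanceSol α Q φ) (hψ : ResonanceSol α Q ψ)
    (θ : Fin 3 → ℂ)
    (hθ1 : θ 0 = φ 1 1 * ψ 2 1 - φ 2 1 * ψ 1 1)
    (hθ2 : θ 1 = φ 2 1 * ψ 0 1 - φ 0 1 * ψ 2 1)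
    (hθ3 : θ 2 = φ 0 1 * ψ 1 1 - φ 1 1 * ψ 0 1)
    (hθne : θ 2 ≠ 0)
    (g : Fin 3 → ℝ → ℂ) (hg : ∀ n, MemLp (g n) 2 (volume.restrict (Ioo (0:ℝ) 1)))
    (u u' u'' : Fin 3 → ℝ → ℂ)
    (hu : acOmega u u' u'')
    (heq : ∀ n, ∀ᵐ x ∂(volume.restrict (Ioo (0:ℝ) 1)),
      - u'' n x + (↑(α * Q n x) : ℂ) * u n x = g n x)
    (hk : kirchhoff u u') :
    u' 0 1 = (θ 0 / θ 2) * u' 2 1 +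
        (1 / θ 2) * ∑ n : Fin 3, ∫ t in (0:ℝ)..1, (φ 1 1 * ψ n t - ψ 1 1 * φ n t) * g n t ∧
    u' 1 1 = (θ 1 / θ 2) * u' 2 1 +
        (1 / θ 2) * ∑ n : Fin 3, ∫ t in (0:ℝ)..1, (ψ 0 1 * φ n t - φ 0 1 * ψ n t) * g n t := by
  have hFin : IsFiniteMeasure (volume.restrict (Ioo (0:ℝ) 1)) := by
    constructor
    rw [Measure.restrict_apply_univ]
    simp [Real.volume_Ioo]
  have hgInt : ∀ n, IntervalIntegrable (g n) volume 0 1 := by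
    intro n
    rw [intervalIntegrable_iff_integrableOn_Ioc_of_le zero_le_one,
      integrableOn_Ioc_iff_integrableOn_Ioo enorm_ne_top]
    exact (hg n).integrable (by norm_num)
  have hφg : ∀ n, IntervalIntegrable (fun t => φ n t * g n t) volume 0 1 := fun n =>
    (hgInt n).continuousOn_mul ((hφ.1 n).continuous.continuousOn)
  have hψg : ∀ n, IntervalIntegrable (fun t => ψ n t * g n t) volume 0 1 := fun n =>
    (hgInt n).continuousOn_mul ((hψ.1 n).continuous.continuousOn)
  have hq : ∀ n : Fin 3, Continuous (fun x => α * Q n x) :=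
    fun n => continuous_const.mul (hQ.1 n).continuous
  have hGφ : ∀ n : Fin 3, ∫ t in (0:ℝ)..1, φ n t * g n t
      = - φ n 1 * u' n 1 + φ n 0 * u' n 0 - deriv (φ n) 0 * u n 0 := by
    intro n
    have := edge_green (fun x => α * Q n x) (hq n) (φ n) (hφ.1 n) (hφ.2.1 n)
      (u n) (u' n) (u'' n) (g n) (hu n).1 (hu n).2.1 (hu n).2.2.1 (hu n).2.2.2 (heq n)
    rw [this, hφ.2.2.2.2.2 n]
    ring
  have hGψ : ∀ n : Fin 3, ∫ t in (0:ℝ)..1, ψ n t * g n t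
      = - ψ n 1 * u' n 1 + ψ n 0 * u' n 0 - deriv (ψ n) 0 * u n 0 := by
    intro n
    have := edge_green (fun x => α * Q n x) (hq n) (ψ n) (hψ.1 n) (hψ.2.1 n)
      (u n) (u' n) (u'' n) (g n) (hu n).1 (hu n).2.1 (hu n).2.2.1 (hu n).2.2.2 (heq n)
    rw [this, hψ.2.2.2.2.2 n]
    ring
  obtain ⟨k1, k2, k3⟩ := hk
  obtain ⟨-, -, f1, f2, f3, -⟩ := hφ
  obtain ⟨-, -, e1, e2, e3, -⟩ := hψ
  have gφ0 := hGφ 0; have gφ1 := hGφ 1; have gφ2 := hGφ 2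
  have gψ0 := hGψ 0; have gψ1 := hGψ 1; have gψ2 := hGψ 2
  rw [← f1] at gφ1; rw [← f2, ← f1] at gφ2
  rw [← e1] at gψ1; rw [← e2, ← e1] at gψ2
  rw [← k1] at gφ1 gψ1; rw [← k2, ← k1] at gφ2 gψ2
  have E1 : φ 0 1 * u' 0 1 + φ 1 1 * u' 1 1 + φ 2 1 * u' 2 1
      = -((∫ t in (0:ℝ)..1, φ 0 t * g 0 t) + (∫ t in (0:ℝ)..1, φ 1 t * g 1 t)
          + (∫ t in (0:ℝ)..1, φ 2 t * g 2 t)) := by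
    linear_combination (gφ0 + gφ1 + gφ2) + φ 0 0 * k3 - u 0 0 * f3
  have E2 : ψ 0 1 * u' 0 1 + ψ 1 1 * u' 1 1 + ψ 2 1 * u' 2 1
      = -((∫ t in (0:ℝ)..1, ψ 0 t * g 0 t) + (∫ t in (0:ℝ)..1, ψ 1 t * g 1 t)
          + (∫ t in (0:ℝ)..1, ψ 2 t * g 2 t)) := by
    linear_combination (gψ0 + gψ1 + gψ2) + ψ 0 0 * k3 - u 0 0 * e3
  have hlinA : ∀ n : Fin 3, (∫ t in (0:ℝ)..1, (φ 1 1 * ψ n t - ψ 1 1 * φ n t) * g n t)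
      = φ 1 1 * (∫ t in (0:ℝ)..1, ψ n t * g n t)
        - ψ 1 1 * (∫ t in (0:ℝ)..1, φ n t * g n t) := by
    intro n
    rw [intervalIntegral.integral_congr (g := fun t =>
        φ 1 1 * (ψ n t * g n t) - ψ 1 1 * (φ n t * g n t)) (fun t _ => by ring),
      intervalIntegral.integral_sub ((hψg n).const_mul _) ((hφg n).const_mul _),
      intervalIntegral.integral_const_mul, intervalIntegral.integral_const_mul]
  have hlinB : ∀ n : Fin 3, (∫ t in (0:ℝ)..1, (ψ 0 1 * φ n t - φ 0 1 * ψ n t) * g n t)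
      = ψ 0 1 * (∫ t in (0:ℝ)..1, φ n t * g n t)
        - φ 0 1 * (∫ t in (0:ℝ)..1, ψ n t * g n t) := by
    intro n
    rw [intervalIntegral.integral_congr (g := fun t =>
        ψ 0 1 * (φ n t * g n t) - φ 0 1 * (ψ n t * g n t)) (fun t _ => by ring),
      intervalIntegral.integral_sub ((hφg n).const_mul _) ((hψg n).const_mul _),
      intervalIntegral.integral_const_mul, intervalIntegral.integral_const_mul]
  constructor
  · rw [Fin.sum_univ_three, hlinA 0, hlinA 1, hlinA 2]
    have key1 : u' 0 1 * θ 2 = θ 0 * u' 2 1 +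
        ((φ 1 1 * (∫ t in (0:ℝ)..1, ψ 0 t * g 0 t) - ψ 1 1 * (∫ t in (0:ℝ)..1, φ 0 t * g 0 t))
          + (φ 1 1 * (∫ t in (0:ℝ)..1, ψ 1 t * g 1 t) - ψ 1 1 * (∫ t in (0:ℝ)..1, φ 1 t * g 1 t))
          + (φ 1 1 * (∫ t in (0:ℝ)..1, ψ 2 t * g 2 t) - ψ 1 1 * (∫ t in (0:ℝ)..1, φ 2 t * g 2 t))) := by
      linear_combination ψ 1 1 * E1 - φ 1 1 * E2 + u' 0 1 * hθ3 - u' 2 1 * hθ1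
    have h0 : u' 0 1 = (u' 0 1 * θ 2) / θ 2 := (mul_div_cancel_right₀ _ hθne).symm
    rw [h0, key1]
    ring
  · rw [Fin.sum_univ_three, hlinB 0, hlinB 1, hlinB 2]
    have key2 : u' 1 1 * θ 2 = θ 1 * u' 2 1 +
        ((ψ 0 1 * (∫ t in (0:ℝ)..1, φ 0 t * g 0 t) - φ 0 1 * (∫ t in (0:ℝ)..1, ψ 0 t * g 0 t))
          + (ψ 0 1 * (∫ t in (0:ℝ)..1, φ 1 t * g 1 t) - φ 0 1 * (∫ t in (0:ℝ)..1, ψ 1 t * g 1 t))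
          + (ψ 0 1 * (∫ t in (0:ℝ)..1, φ 2 t * g 2 t) - φ 0 1 * (∫ t in (0:ℝ)..1, ψ 2 t * g 2 t))) := by
      linear_combination φ 0 1 * E2 - ψ 0 1 * E1 + u' 1 1 * hθ3 - u' 2 1 * hθ2
    have h1 : u' 1 1 = (u' 1 1 * θ 2) / θ 2 := (mul_div_cancel_right₀ _ hθne).symm
    rw [h1, key2]
    ring
end
end

section
/- If φ and ψ are linearly independent solutions of the resonance problem, then the vectors (φ₁(1), φ₂(1), φ₃(1)) and (ψ₁(1), ψ₂(1), ψ₃(1)) are linearly independent in ℂ³; in particular the coupling vector (θ₁,θ₂,θ₃) with θ₁ = φ₂(1)ψ₃(1) − φ₃(1)ψ₂(1), θ₂ = φ₃(1)ψ₁(1) − φ₁(1)ψ₃(1), θ₃ = φ₁(1)ψ₂(1) − φ₂(1)ψ₁(1) is nonzero. -/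
open MeasureTheory Set

noncomputable section

/-- Uniqueness backward from x=1: a C² solution of h'' = c·h on [0,1] with
h(1)=0, h'(1)=0 vanishes on [0,1]. -/
lemma ode_vanish (c : ℝ → ℝ) (hc : Continuous c) (hcsupp : ∀ x, x ∉ Icc (0:ℝ) 1 → c x = 0)
    (h : ℝ → ℂ) (hh : ContDiff ℝ 2 h)
    (hode : ∀ x ∈ Icc (0:ℝ) 1, deriv (deriv h) x = (c x : ℂ) * h x)
    (h1 : h 1 = 0) (h1' : deriv h 1 = 0) :
    ∀ x ∈ Icc (0:ℝ) 1, h x = 0 := by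
  obtain ⟨M, hM⟩ := isCompact_Icc.exists_bound_of_continuousOn (hc.continuousOn (s := Icc 0 1))
  have hM0 : 0 ≤ M := le_trans (norm_nonneg _) (hM 0 (by constructor <;> norm_num))
  have hcb : ∀ t : ℝ, ‖(c t : ℂ)‖ ≤ M := by
    intro t
    by_cases ht : t ∈ Icc (0:ℝ) 1
    · simpa using hM t ht
    · simp [hcsupp t ht, hM0]
  set K : NNReal := Real.toNNReal (max 1 M) with hK
  have hKcoe : (K : ℝ) = max 1 M := Real.coe_toNNReal _ (le_trans zero_le_one (le_max_left _ _))
  set v : ℝ → ℂ × ℂ → ℂ × ℂ := fun t p => (p.2, (c t : ℂ) * p.1) with hv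
  have hlip : ∀ t, LipschitzOnWith K (v t) univ := by
    intro t
    apply LipschitzWith.lipschitzOnWith
    apply LipschitzWith.of_dist_le_mul
    intro p q
    rw [Prod.dist_eq, Prod.dist_eq]
    simp only [hv]
    apply max_le
    · calc dist p.2 q.2 ≤ max (dist p.1 q.1) (dist p.2 q.2) := le_max_right _ _
        _ ≤ K * max (dist p.1 q.1) (dist p.2 q.2) := by
            nlinarith [le_max_left (1:ℝ) M, hKcoe, dist_nonneg (x := p.1) (y := q.1),
              dist_nonneg (x := p.2) (y := q.2), le_max_left (dist p.1 q.1) (dist p.2 q.2),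
              le_max_right (dist p.1 q.1) (dist p.2 q.2)]
    · have : dist ((c t : ℂ) * p.1) ((c t : ℂ) * q.1) = ‖(c t : ℂ)‖ * dist p.1 q.1 := by
        rw [dist_eq_norm, dist_eq_norm, ← mul_sub, norm_mul]
      rw [this]
      calc ‖(c t : ℂ)‖ * dist p.1 q.1 ≤ M * max (dist p.1 q.1) (dist p.2 q.2) := by
            apply mul_le_mul (hcb t) (le_max_left _ _) dist_nonneg hM0
        _ ≤ K * max (dist p.1 q.1) (dist p.2 q.2) := by
            apply mul_le_mul_of_nonneg_right _ (le_trans dist_nonneg (le_max_left _ _))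
            rw [hKcoe]; exact le_max_right _ _
  have hdiff : Differentiable ℝ h := hh.differentiable (by norm_num)
  have hdiff' : Differentiable ℝ (deriv h) := by
    have h2 : ContDiff ℝ (1 + 1) h := by exact_mod_cast hh
    exact ((contDiff_succ_iff_deriv.mp h2).2.2).differentiable one_ne_zero
  set f : ℝ → ℂ × ℂ := fun t => (h t, deriv h t) with hf
  have hfd : ∀ t ∈ Ioc (0:ℝ) 1, HasDerivWithinAt f (v t (f t)) (Iic t) t := by
    intro t ht
    have h1d : HasDerivAt h (deriv h t) t := (hdiff t).hasDerivAt
    have h2d : HasDerivAt (deriv h) ((c t : ℂ) * h t) t := by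
      have := (hdiff' t).hasDerivAt
      rwa [hode t ⟨le_of_lt ht.1, ht.2⟩] at this
    exact (h1d.prodMk h2d).hasDerivWithinAt
  have heq : EqOn f (fun _ => (0, 0)) (Icc (0:ℝ) 1) := by
    apply ODE_solution_unique_of_mem_Icc_left (fun t _ => hlip t)
      (Continuous.continuousOn (hdiff.continuous.prodMk hdiff'.continuous)) hfd (fun _ _ => mem_univ _)
      continuousOn_const
      (fun t _ => by convert (hasDerivAt_const t ((0:ℂ),(0:ℂ))).hasDerivWithinAt using 1; simp [hv])
      (fun _ _ => mem_univ _)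
    simp [hf, h1, h1']
  intro x hx
  have := heq hx
  have : h x = 0 ∧ deriv h x = 0 := by simpa [hf, Prod.ext_iff] using this
  exact this.1

lemma comb_vanish (α : ℝ) (Q : Fin 3 → ℝ → ℝ) (hQ : QAdmissible Q)
    (φ ψ : Fin 3 → ℝ → ℂ) (hφ : ResonanceSol α Q φ) (hψ : ResonanceSol α Q ψ)
    (a b : ℂ) (hab : ∀ n : Fin 3, a * φ n 1 + b * ψ n 1 = 0) :
    ∀ n, ∀ x ∈ Icc (0:ℝ) 1, a * φ n x + b * ψ n x = 0 := by
  intro n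
  set h : ℝ → ℂ := fun x => a * φ n x + b * ψ n x with hhdef
  have hh : ContDiff ℝ 2 h :=
    ((hφ.1 n).const_smul a).add ((hψ.1 n).const_smul b)
  have hdφ : Differentiable ℝ (φ n) := (hφ.1 n).differentiable (by norm_num)
  have hdψ : Differentiable ℝ (ψ n) := (hψ.1 n).differentiable (by norm_num)
  have hderiv : ∀ x, deriv h x = a * deriv (φ n) x + b * deriv (ψ n) x := by
    intro x
    have := (((hdφ x).hasDerivAt.const_mul a).add ((hdψ x).hasDerivAt.const_mul b)).deriv
    exact this
  have hdφ' : Differentiable ℝ (deriv (φ n)) := by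
    have h2 : ContDiff ℝ (1 + 1) (φ n) := by exact_mod_cast hφ.1 n
    exact ((contDiff_succ_iff_deriv.mp h2).2.2).differentiable one_ne_zero
  have hdψ' : Differentiable ℝ (deriv (ψ n)) := by
    have h2 : ContDiff ℝ (1 + 1) (ψ n) := by exact_mod_cast hψ.1 n
    exact ((contDiff_succ_iff_deriv.mp h2).2.2).differentiable one_ne_zero
  have hderiv2 : ∀ x, deriv (deriv h) x =
      a * deriv (deriv (φ n)) x + b * deriv (deriv (ψ n)) x := by
    intro x
    have hfun : deriv h = fun x => a * deriv (φ n) x + b * deriv (ψ n) x := funext hderiv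
    rw [hfun]
    exact (((hdφ' x).hasDerivAt.const_mul a).add ((hdψ' x).hasDerivAt.const_mul b)).deriv
  have hode : ∀ x ∈ Icc (0:ℝ) 1, deriv (deriv h) x = ((α * Q n x : ℝ) : ℂ) * h x := by
    intro x hx
    have e1 := hφ.2.1 n x hx
    have e2 := hψ.2.1 n x hx
    rw [hderiv2 x]
    have d1 : deriv (deriv (φ n)) x = ((α * Q n x : ℝ) : ℂ) * φ n x := by
      linear_combination -e1
    have d2 : deriv (deriv (ψ n)) x = ((α * Q n x : ℝ) : ℂ) * ψ n x := by
      linear_combination -e2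
    rw [d1, d2]; simp [hhdef]; ring
  have h1 : h 1 = 0 := hab n
  have h1' : deriv h 1 = 0 := by
    rw [hderiv, hφ.2.2.2.2.2 n, hψ.2.2.2.2.2 n]; ring
  exact ode_vanish (fun x => α * Q n x) (continuous_const.mul (hQ.1 n).continuous)
    (fun x hx => by show α * Q n x = 0; rw [hQ.2.1 n x hx, mul_zero]) h hh hode h1 h1'

/-- If `φ, ψ` are linearly independent solutions of the resonance problem, then
their endpoint value vectors are linearly independent; in particular the coupling
vector `θ` is nonzero. -/
theorem coupling_vector_nonzero
    (α : ℝ) (Q : Fin 3 → ℝ → ℝ) (hQ : QAdmissible Q)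
    (φ ψ : Fin 3 → ℝ → ℂ) (hφ : ResonanceSol α Q φ) (hψ : ResonanceSol α Q ψ)
    (hindep : ∀ a b : ℂ, (∀ n, ∀ x ∈ Icc (0:ℝ) 1, a * φ n x + b * ψ n x = 0) → a = 0 ∧ b = 0)
    (θ : Fin 3 → ℂ)
    (hθ1 : θ 0 = φ 1 1 * ψ 2 1 - φ 2 1 * ψ 1 1)
    (hθ2 : θ 1 = φ 2 1 * ψ 0 1 - φ 0 1 * ψ 2 1)
    (hθ3 : θ 2 = φ 0 1 * ψ 1 1 - φ 1 1 * ψ 0 1) :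
    (∀ a b : ℂ, (∀ n : Fin 3, a * φ n 1 + b * ψ n 1 = 0) → a = 0 ∧ b = 0) ∧
    ¬(θ 0 = 0 ∧ θ 1 = 0 ∧ θ 2 = 0) := by
  have key : ∀ a b : ℂ, (∀ n : Fin 3, a * φ n 1 + b * ψ n 1 = 0) → a = 0 ∧ b = 0 :=
    fun a b hab => hindep a b (comb_vanish α Q hQ φ ψ hφ hψ a b hab)
  refine ⟨key, ?_⟩
  rintro ⟨t0, t1, t2⟩
  rw [hθ1] at t0; rw [hθ2] at t1; rw [hθ3] at t2
  -- for each i, (ψ i 1) • φ(1) - (φ i 1) • ψ(1) = 0, hence ψ i 1 = φ i 1 = 0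
  have hz : ∀ i : Fin 3, φ i 1 = 0 := by
    intro i
    have := key (ψ i 1) (-(φ i 1)) (fun n => by
      fin_cases i <;> fin_cases n <;>
        simp only [Fin.isValue, Fin.mk_zero, Fin.mk_one, Fin.reduceFinMk] <;>
        first
          | ring1
          | linear_combination t0 | linear_combination -t0
          | linear_combination t1 | linear_combination -t1
          | linear_combination t2 | linear_combination -t2)
    exact neg_eq_zero.mp this.2
  have := key 1 0 (fun n => by simp [hz n])
  exact one_ne_zero this.1
end
end

section
/- (Claim from the proof of Lemma 2.) Suppose φ is a solution of the resonance problem with φ₁(1) ≠ 0 and every solution of the resonance problem is a scalar multiple of φ. Then it is impossible that both of the following problems admit nontrivial solutions: (i) −f'' + αQ₂f = 0 on [0,1] with f(0) = 0 and f'(1) = 0; (ii) −f'' + αQ₃f = 0 on [0,1] with f(0) = 0 and f'(1) = 0. (In other words, α does not belong to the intersection of the spectra of the two Dirichlet–Neumann problems on the edges ω₂ and ω₃.) -/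
open MeasureTheory Set

noncomputable section

lemma deriv_cmul' (c : ℂ) (f : ℝ → ℂ) (hf : Differentiable ℝ f) :
    deriv (fun x => c * f x) = fun x => c * deriv f x := by
  funext x; exact deriv_const_mul c (hf x)

lemma contdiff2_deriv_diff (f : ℝ → ℂ) (hf : ContDiff ℝ 2 f) :
    Differentiable ℝ (deriv f) := by
  have h2 : ContDiff ℝ (1+1) f := by norm_num at hf ⊢; exact hf
  exact ((contDiff_succ_iff_deriv.mp h2).2.2).differentiable (by norm_num)

/-- In the simple resonant case, `α` cannot lie in the intersection of the spectra
of the two Dirichlet–Neumann problems on the edges `ω₂` and `ω₃`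
(claim from the proof of Lemma 2). -/
theorem no_double_edge_resonance
    (α : ℝ) (Q : Fin 3 → ℝ → ℝ) (hQ : QAdmissible Q)
    (φ : Fin 3 → ℝ → ℂ) (hφ : ResonanceSol α Q φ) (hφ1 : φ 0 1 ≠ 0)
    (hspan : ∀ h, ResonanceSol α Q h → ∃ c : ℂ, ∀ n, ∀ x ∈ Icc (0:ℝ) 1, h n x = c * φ n x) :
    ¬((∃ f : ℝ → ℂ, ContDiff ℝ 2 f ∧
        (∀ x ∈ Icc (0:ℝ) 1, - deriv (deriv f) x + (↑(α * Q 1 x) : ℂ) * f x = 0) ∧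
        f 0 = 0 ∧ deriv f 1 = 0 ∧ (∃ x ∈ Icc (0:ℝ) 1, f x ≠ 0)) ∧
      (∃ f : ℝ → ℂ, ContDiff ℝ 2 f ∧
        (∀ x ∈ Icc (0:ℝ) 1, - deriv (deriv f) x + (↑(α * Q 2 x) : ℂ) * f x = 0) ∧
        f 0 = 0 ∧ deriv f 1 = 0 ∧ (∃ x ∈ Icc (0:ℝ) 1, f x ≠ 0))) := by
  rintro ⟨⟨f, hf, hfode, hf0, hf1, x2, hx2, hfx2⟩, ⟨g, hg, hgode, hg0, hg1, x3, hx3, hgx3⟩⟩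
  have hfd : Differentiable ℝ f := hf.differentiable (by norm_num)
  have hgd : Differentiable ℝ g := hg.differentiable (by norm_num)
  have key : ∀ c d : ℂ, c * deriv f 0 + d * deriv g 0 = 0 →
      (∀ x ∈ Icc (0:ℝ) 1, c * f x = 0) ∧ (∀ x ∈ Icc (0:ℝ) 1, d * g x = 0) := by
    intro c d hcd
    set h : Fin 3 → ℝ → ℂ := ![fun _ => 0, fun x => c * f x, fun x => d * g x] with hh
    have h0 : h 0 = fun _ => (0:ℂ) := rfl
    have h1 : h 1 = fun x => c * f x := rfl
    have h2 : h 2 = fun x => d * g x := rfl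
    have hdf : deriv (fun x => c * f x) = fun x => c * deriv f x := deriv_cmul' c f hfd
    have hdg : deriv (fun x => d * g x) = fun x => d * deriv g x := deriv_cmul' d g hgd
    have hddf : deriv (deriv (fun x => c * f x)) = fun x => c * deriv (deriv f) x := by
      rw [hdf]; exact deriv_cmul' c (deriv f) (contdiff2_deriv_diff f hf)
    have hddg : deriv (deriv (fun x => d * g x)) = fun x => d * deriv (deriv g) x := by
      rw [hdg]; exact deriv_cmul' d (deriv g) (contdiff2_deriv_diff g hg)
    have hres : ResonanceSol α Q h := by
      refine ⟨?_, ?_, ?_, ?_, ?_, ?_⟩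
      · intro n
        fin_cases n
        · rw [show h ⟨0, by norm_num⟩ = h 0 from rfl, h0]; exact contDiff_const
        · rw [show h ⟨1, by norm_num⟩ = h 1 from rfl, h1]; exact contDiff_const.mul hf
        · rw [show h ⟨2, by norm_num⟩ = h 2 from rfl, h2]; exact contDiff_const.mul hg
      · intro n x hx
        fin_cases n
        · rw [show h ⟨0, by norm_num⟩ = h 0 from rfl, h0]; simp
        · rw [show h ⟨1, by norm_num⟩ = h 1 from rfl, h1, hddf]
          have := hfode x hx
          push_cast at this ⊢
          linear_combination c * this
        · rw [show h ⟨2, by norm_num⟩ = h 2 from rfl, h2, hddg]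
          have := hgode x hx
          push_cast at this ⊢
          linear_combination d * this
      · rw [h0, h1]; simp [hf0]
      · rw [h1, h2]; simp [hf0, hg0]
      · rw [h0, h1, h2, hdf, hdg]; simpa using hcd
      · intro n
        fin_cases n
        · rw [show h ⟨0, by norm_num⟩ = h 0 from rfl, h0]; simp
        · rw [show h ⟨1, by norm_num⟩ = h 1 from rfl, h1, hdf]; simp [hf1]
        · rw [show h ⟨2, by norm_num⟩ = h 2 from rfl, h2, hdg]; simp [hg1]
    obtain ⟨c', hc'⟩ := hspan h hres
    have hc'0 : c' = 0 := by
      have := hc' 0 1 (by norm_num)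
      rw [h0] at this
      simp only at this
      rcases mul_eq_zero.mp this.symm with h' | h'
      · exact h'
      · exact absurd h' hφ1
    constructor
    · intro x hx
      have := hc' 1 x hx
      rw [h1] at this
      simpa [hc'0] using this
    · intro x hx
      have := hc' 2 x hx
      rw [h2] at this
      simpa [hc'0] using this
  by_cases ha : deriv f 0 = 0
  · have := (key 1 0 (by simp [ha])).1 x2 hx2
    simp at this
    exact hfx2 this
  · have := (key (deriv g 0) (-(deriv f 0)) (by ring)).2 x3 hx3
    rcases mul_eq_zero.mp this with h' | h'
    · exact ha (by simpa using h')
    · exact hgx3 h'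
end
end
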